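/- arXiv:1803.04244 — 6 statements merged into one kernel-verified Lean document; each statement's English description precedes it below -/
import Mathlib

section
/- Every random utility model is a generalized stochastic preference model: if P is a choice model induced by a probability distribution over strict rankings of the alternatives (where a consumer with a given ranking, offered a set S, chooses the highest-ranked available alternative, or the no-choice option 0 if the ranking places 0 above all elements of S), then there exists a probability distribution over GSP consumer types, all of which are rational (i.e., of the form (ℓ,1) or (ℓ,0)), inducing exactly the same choice probabilities P(x,S) for all S ⊆ C and x ∈ S ∪ {0}. -/
open Finset

/-- `subseq ℓ S` is the subsequence of `ℓ` consisting of the elements of `S`. -/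
def subseq (l : List ℕ) (S : Finset ℕ) : List ℕ := l.filter (fun x => x ∈ S)

/-- A consumer type over the ground set `C`: a duplicate-free sequence `seq` of
elements of `C` together with a position index `pos ≤ |seq|`. -/
structure ConsumerType (C : Finset ℕ) where
  seq : List ℕ
  pos : ℕ
  nodup : seq.Nodup
  mem_ground : ∀ x ∈ seq, x ∈ C
  pos_le : pos ≤ seq.length

/-- Indicator (as a real number) that consumer type `j` picks alternative `x` from the
offer set `S`: this happens when `j.pos ≥ 1`, `x ∈ S`, and `x` occupies position `j.pos`
(positions starting at 1) of the subsequence `subseq j.seq S`. -/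
def picks {C : Finset ℕ} (j : ConsumerType C) (x : ℕ) (S : Finset ℕ) : ℝ :=
  if 1 ≤ j.pos ∧ x ∈ S ∧ (subseq j.seq S)[j.pos - 1]? = some x then 1 else 0

/-- The binary choice function of a consumer type, including the no-choice option `0`:
`C_j(0,S) = 1 - ∑_{y ∈ S} C_j(y,S)`, and `C_j(x,S)` is the picking indicator for `x ≠ 0`. -/
def Cfun {C : Finset ℕ} (j : ConsumerType C) (x : ℕ) (S : Finset ℕ) : ℝ :=
  if x = 0 then 1 - ∑ y ∈ S, picks j y S else picks j x S

/-- A generalized stochastic preference (GSP) model: a (finitely supported) probability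
distribution over consumer types, given by weights `w` on finitely many types `typ`. -/
structure GSP (C : Finset ℕ) where
  n : ℕ
  w : Fin n → ℝ
  typ : Fin n → ConsumerType C
  w_nonneg : ∀ k, 0 ≤ w k
  w_sum : ∑ k, w k = 1

/-- The choice probabilities induced by a GSP model. -/
def GSP.prob {C : Finset ℕ} (M : GSP C) (x : ℕ) (S : Finset ℕ) : ℝ :=
  ∑ k, M.w k * Cfun (M.typ k) x S
/-- A strict ranking of the alternatives in `C` together with the no-choice option `0`:
a duplicate-free list containing exactly the elements of `C ∪ {0}`. -/
structure Ranking (C : Finset ℕ) where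
  seq : List ℕ
  nodup : seq.Nodup
  complete : ∀ x, x ∈ seq ↔ x ∈ insert 0 C

/-- The (deterministic) choice of a consumer with ranking `r` offered the set `S`:
she picks the highest-ranked element of `S ∪ {0}` (value `1` on that element, `0` elsewhere).
Choosing `0` represents the no-choice option. -/
def Ranking.choice {C : Finset ℕ} (r : Ranking C) (x : ℕ) (S : Finset ℕ) : ℝ :=
  if (r.seq.filter (fun y => y ∈ insert 0 S)).head? = some x then 1 else 0

/-- A random utility model (RUM): a probability distribution over strict rankings. -/
structure RUM (C : Finset ℕ) where
  n : ℕ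
  w : Fin n → ℝ
  rnk : Fin n → Ranking C
  w_nonneg : ∀ k, 0 ≤ w k
  w_sum : ∑ k, w k = 1

/-- The choice probabilities induced by a RUM. -/
def RUM.prob {C : Finset ℕ} (M : RUM C) (x : ℕ) (S : Finset ℕ) : ℝ :=
  ∑ k, M.w k * (M.rnk k).choice x S

/-- The rational consumer type associated to a ranking: the prefix of the ranking
strictly above the no-choice option `0`, with position index `1` (or `0` if empty). -/
def toType {C : Finset ℕ} (r : Ranking C) : ConsumerType C where
  seq := r.seq.takeWhile (fun y => y ≠ 0)
  pos := min 1 (r.seq.takeWhile (fun y => y ≠ 0)).length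
  nodup := ((List.takeWhile_prefix _).sublist).nodup r.nodup
  mem_ground := by
    intro x hx
    have h1 : x ∈ r.seq := ((List.takeWhile_prefix _).sublist).mem hx
    have h2 : x ≠ 0 := by simpa using List.mem_takeWhile_imp hx
    have h3 := (r.complete x).mp h1
    rcases Finset.mem_insert.mp h3 with h | h
    · exact absurd h h2
    · exact h
  pos_le := min_le_right _ _

lemma seq_decomp {C : Finset ℕ} (r : Ranking C) :
    ∃ rest, r.seq = r.seq.takeWhile (fun y => decide (y ≠ 0)) ++ 0 :: rest := by
  have h0 : (0:ℕ) ∈ r.seq := (r.complete 0).mpr (Finset.mem_insert_self _ _)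
  cases hd : r.seq.dropWhile (fun y => decide (y ≠ 0)) with
  | nil =>
    exfalso
    have h0' : (0:ℕ) ∈ r.seq.takeWhile (fun y => decide (y ≠ 0)) := by
      rw [← List.takeWhile_append_dropWhile (p := fun y => decide (y ≠ 0)) (l := r.seq), hd] at h0
      simpa using h0
    simpa using List.mem_takeWhile_imp h0'
  | cons b rest =>
    have hb : b = 0 := by
      have h := List.head?_dropWhile_not (fun y => decide (y ≠ 0)) r.seq
      rw [hd] at h
      simpa using h
    exact ⟨rest, by
      conv_lhs => rw [← List.takeWhile_append_dropWhile (p := fun y => decide (y ≠ 0)) (l := r.seq), hd, hb]⟩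

lemma key {C : Finset ℕ} (r : Ranking C) (S : Finset ℕ) (hS0 : 0 ∉ S) (x : ℕ) :
    Cfun (toType r) x S = r.choice x S := by
  obtain ⟨rest, hrest⟩ := seq_decomp r
  set t := r.seq.takeWhile (fun y => decide (y ≠ 0)) with ht
  have hseq : (toType r).seq = t := rfl
  have hpos : (toType r).pos = min 1 t.length := rfl
  have hfil : r.seq.filter (fun y => decide (y ∈ insert 0 S)) =
      subseq t S ++ 0 :: rest.filter (fun y => decide (y ∈ insert 0 S)) := by
    rw [hrest, List.filter_append, List.filter_cons_of_pos (by simp)]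
    congr 1
    unfold subseq
    apply List.filter_congr
    intro y hy
    have hy0 : y ≠ 0 := by simpa using List.mem_takeWhile_imp hy
    simp [Finset.mem_insert, hy0]
  have hch : r.choice x S =
      if (subseq t S ++ 0 :: rest.filter (fun y => decide (y ∈ insert 0 S))).head? = some x
        then (1:ℝ) else 0 := by
    rw [Ranking.choice, hfil]
  cases htl : t with
  | nil =>
    have hp0 : (toType r).pos = 0 := by rw [hpos, htl]; rfl
    have hsub : subseq t S = [] := by rw [htl]; rfl
    have hpick : ∀ y, picks (toType r) y S = 0 := by
      intro y
      simp [picks, hp0]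
    rcases eq_or_ne x 0 with hx | hx
    · subst hx; simp [Cfun, hpick, hch, hsub]
    · simp [Cfun, hx, hpick, hch, hsub, Ne.symm hx]
  | cons a t' =>
    have hp1 : (toType r).pos = 1 := by
      rw [hpos, htl]
      simp
    cases hf : subseq t S with
    | nil =>
      have hpick : ∀ y, picks (toType r) y S = 0 := by
        intro y
        simp [picks, hp1, hseq, hf]
      rcases eq_or_ne x 0 with hx | hx
      · subst hx; simp [Cfun, hpick, hch, hf]
      · simp [Cfun, hx, hpick, hch, hf, Ne.symm hx]
    | cons a' l =>
      have ha'S : a' ∈ S := by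
        have : a' ∈ subseq t S := by rw [hf]; exact List.mem_cons_self
        have := List.of_mem_filter this
        simpa using this
      have ha'0 : a' ≠ 0 := fun h => hS0 (h ▸ ha'S)
      have hpick : ∀ y, picks (toType r) y S = if y ∈ S ∧ a' = y then 1 else 0 := by
        intro y
        simp [picks, hp1, hseq, hf, eq_comm]
      have hsum : ∑ y ∈ S, picks (toType r) y S = 1 := by
        have h1 : ∀ y ∈ S, picks (toType r) y S = if a' = y then 1 else 0 := by
          intro y hy
          rw [hpick]
          simp [hy]
        rw [Finset.sum_congr rfl h1, Finset.sum_ite_eq S a' (fun _ => (1:ℝ)), if_pos ha'S]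
      rcases eq_or_ne x 0 with hx | hx
      · subst hx; simp [Cfun, hsum, hch, hf, ha'0]
      · rw [Cfun, if_neg hx, hpick, hch]
        by_cases hax : a' = x
        · simp [hax, hax ▸ ha'S, hf]
        · simp [hax, hf]

/-- Every random utility model is a generalized stochastic preference model:
for any RUM `M` there is a GSP model `G`, all of whose consumer types are rational
(position index `0` or `1`), inducing exactly the same choice probabilities
`P(x,S)` for all offer sets `S ⊆ C` and all `x ∈ S ∪ {0}`. -/
theorem rum_is_gsp (C : Finset ℕ) (h0 : 0 ∉ C) (M : RUM C) :
    ∃ G : GSP C, (∀ k, (G.typ k).pos ≤ 1) ∧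
      ∀ S ⊆ C, ∀ x ∈ insert 0 S, G.prob x S = M.prob x S := by
  refine ⟨⟨M.n, M.w, fun k => toType (M.rnk k), M.w_nonneg, M.w_sum⟩, ?_, ?_⟩
  · intro k
    exact min_le_left _ _
  · intro S hS x _
    have hS0 : 0 ∉ S := fun h => h0 (hS h)
    unfold GSP.prob RUM.prob
    exact Finset.sum_congr rfl fun k _ => by rw [key (M.rnk k) S hS0 x]
end

section
/- For every generalized stochastic preference model P and all offer sets S ⊆ S' ⊆ C, the total probability of making a purchase is monotone: Σ_{i∈S} P(i,S) ≤ Σ_{i∈S'} P(i,S'). Equivalently, the probability of choosing the no-choice option cannot increase when the offer set is enlarged: P(0,S') ≤ P(0,S). -/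
open Finset

/-- For every generalized stochastic preference model and all offer sets
`S ⊆ S' ⊆ C`, the total purchase probability is monotone:
`∑_{i∈S} P(i,S) ≤ ∑_{i∈S'} P(i,S')`; equivalently the no-choice probability cannot
increase when the offer set is enlarged: `P(0,S') ≤ P(0,S)`. -/
theorem gsp_purchase_monotone (C : Finset ℕ) (h0 : 0 ∉ C) (M : GSP C)
    (S S' : Finset ℕ) (hSS : S ⊆ S') (hS' : S' ⊆ C) :
    (∑ i ∈ S, M.prob i S) ≤ (∑ i ∈ S', M.prob i S') ∧ M.prob 0 S' ≤ M.prob 0 S := by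
  -- key: the total picking sum of a type is an indicator
  have sum_picks : ∀ (j : ConsumerType C) (T : Finset ℕ),
      ∑ y ∈ T, picks j y T =
        if 1 ≤ j.pos ∧ j.pos ≤ (subseq j.seq T).length then 1 else 0 := by
    intro j T
    by_cases h1 : 1 ≤ j.pos
    · by_cases h2 : j.pos ≤ (subseq j.seq T).length
      · have hlt : j.pos - 1 < (subseq j.seq T).length := by omega
        obtain ⟨a, ha⟩ : ∃ a, (subseq j.seq T)[j.pos - 1]? = some a :=
          ⟨_, List.getElem?_eq_getElem hlt⟩
        have haT : a ∈ T := by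
          have : a ∈ subseq j.seq T := by
            have := List.mem_of_getElem? ha
            exact this
          simp only [subseq, List.mem_filter, decide_eq_true_eq] at this
          exact this.2
        have : ∑ y ∈ T, picks j y T = ∑ y ∈ T, (if y = a then (1:ℝ) else 0) := by
          refine Finset.sum_congr rfl fun y hy => ?_
          unfold picks
          rw [ha]
          by_cases hya : y = a
          · subst hya; simp [h1, hy]
          · rw [if_neg (fun h => hya (Option.some_injective _ h.2.2).symm), if_neg hya]
        rw [this, Finset.sum_ite_eq' T a (fun _ => (1:ℝ))]
        simp [haT, h1, h2]
      · have : ∀ y ∈ T, picks j y T = 0 := by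
          intro y hy
          unfold picks
          have : (subseq j.seq T)[j.pos - 1]? = none :=
            List.getElem?_eq_none (by omega)
          simp [this]
        rw [Finset.sum_congr rfl this]
        simp [h1, h2]
    · have : ∀ y ∈ T, picks j y T = 0 := by
        intro y hy; unfold picks; simp [h1]
      rw [Finset.sum_congr rfl this]
      simp [h1]
  have len_mono : ∀ (j : ConsumerType C),
      (subseq j.seq S).length ≤ (subseq j.seq S').length := by
    intro j
    exact List.Sublist.length_le
      (List.monotone_filter_right _ (by intro a ha; simpa using hSS (by simpa using ha)))
  have ind_mono : ∀ (j : ConsumerType C),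
      (if 1 ≤ j.pos ∧ j.pos ≤ (subseq j.seq S).length then (1:ℝ) else 0) ≤
      (if 1 ≤ j.pos ∧ j.pos ≤ (subseq j.seq S').length then (1:ℝ) else 0) := by
    intro j
    by_cases h : 1 ≤ j.pos ∧ j.pos ≤ (subseq j.seq S).length
    · have : 1 ≤ j.pos ∧ j.pos ≤ (subseq j.seq S').length :=
        ⟨h.1, le_trans h.2 (len_mono j)⟩
      simp [h, this]
    · simp only [h, if_false]
      positivity
  have hsum_le : ∀ (j : ConsumerType C),
      ∑ y ∈ S, picks j y S ≤ ∑ y ∈ S', picks j y S' := by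
    intro j; rw [sum_picks j S, sum_picks j S']; exact ind_mono j
  constructor
  · have h1 : ∀ (T : Finset ℕ), T ⊆ C →
        ∑ i ∈ T, M.prob i T = ∑ k, M.w k * ∑ y ∈ T, picks (M.typ k) y T := by
      intro T hT
      unfold GSP.prob
      rw [Finset.sum_comm]
      refine Finset.sum_congr rfl fun k _ => ?_
      rw [← Finset.mul_sum]
      congr 1
      refine Finset.sum_congr rfl fun i hi => ?_
      have : i ≠ 0 := fun h => h0 (h ▸ hT hi)
      simp [Cfun, this]
    rw [h1 S (fun x hx => hS' (hSS hx)), h1 S' hS']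
    exact Finset.sum_le_sum fun k _ =>
      mul_le_mul_of_nonneg_left (hsum_le (M.typ k)) (M.w_nonneg k)
  · unfold GSP.prob
    refine Finset.sum_le_sum fun k _ => ?_
    refine mul_le_mul_of_nonneg_left ?_ (M.w_nonneg k)
    have h := hsum_le (M.typ k)
    simp only [Cfun, if_pos rfl]
    simp only [if_true]
    linarith
end

section
/- There is no nonnegative solution to the following system in the twelve unknowns p(σ,1) and p(σ,2), where σ ranges over the six permutations of {1,2,3}: (i) the sum of all twelve unknowns equals 1; (ii) p((1,2,3),1) + p((1,3,2),1) + p((3,1,2),1) + p((2,1,3),2) + p((2,3,1),2) + p((3,2,1),2) = 1; (iii) p((2,3,1),1) + p((2,1,3),1) + p((1,2,3),1) + p((3,2,1),2) + p((3,1,2),2) + p((1,3,2),2) = 1; (iv) p((3,1,2),1) + p((3,2,1),1) + p((2,3,1),1) + p((1,3,2),2) + p((1,2,3),2) + p((2,1,3),2) = 1. -/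
/-- The linear system arising from the necessary conditions for a generalized
stochastic preference representation of the cyclic choice model on `{1,2,3}` (with
`P(1,{1,2}) = P(2,{2,3}) = P(3,{1,3}) = 1`) has no nonnegative solution: there are no
nonnegative reals `p σ i`, for `σ` ranging over the six permutations of `{1,2,3}` (written as
lists) and `i ∈ {1,2}`, summing to `1` and satisfying the three unit equations below. -/
theorem no_nonneg_solution :
    ¬ ∃ p : List ℕ → ℕ → ℝ,
      (∀ σ i, 0 ≤ p σ i) ∧
      (p [1,2,3] 1 + p [1,3,2] 1 + p [2,1,3] 1 + p [2,3,1] 1 + p [3,1,2] 1 + p [3,2,1] 1 +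
       p [1,2,3] 2 + p [1,3,2] 2 + p [2,1,3] 2 + p [2,3,1] 2 + p [3,1,2] 2 + p [3,2,1] 2 = 1) ∧
      (p [1,2,3] 1 + p [1,3,2] 1 + p [3,1,2] 1 +
       p [2,1,3] 2 + p [2,3,1] 2 + p [3,2,1] 2 = 1) ∧
      (p [2,3,1] 1 + p [2,1,3] 1 + p [1,2,3] 1 +
       p [3,2,1] 2 + p [3,1,2] 2 + p [1,3,2] 2 = 1) ∧
      (p [3,1,2] 1 + p [3,2,1] 1 + p [2,3,1] 1 +
       p [1,3,2] 2 + p [1,2,3] 2 + p [2,1,3] 2 = 1) := by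
  rintro ⟨p, hnn, h1, h2, h3, h4⟩
  linarith [hnn [1,3,2] 1, hnn [2,1,3] 1, hnn [3,2,1] 1, hnn [2,3,1] 2, hnn [3,1,2] 2, hnn [1,2,3] 2]
end

section
/- The GSP class is not contained in the RAM class: the generalized stochastic preference model P on C = {1,2,3,4} with consumer types ((2,3,1,4),1) of probability 0.41, ((2,4,1,3),1) of probability 0.09, ((2,1,3,4),2) of probability 0.1, ((3,1,2,4),2) of probability 0.01, ((1,3,2,4),2) of probability 0.09, and ((1,2,3,4),0) of probability 0.30 cannot be represented by any random attention model; i.e., there exist no strict ranking π of C and attention rule μ satisfying the RAM conditions whose induced choice probabilities equal P(i,S) for all S ⊆ C and i ∈ S ∪ {0}. -/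
open Finset

/-- Consumer type `((2,3,1,4), 1)`. -/
def gT1 : ConsumerType ({1,2,3,4} : Finset ℕ) := ⟨[2,3,1,4], 1, by decide, by decide, by decide⟩
/-- Consumer type `((2,4,1,3), 1)`. -/
def gT2 : ConsumerType ({1,2,3,4} : Finset ℕ) := ⟨[2,4,1,3], 1, by decide, by decide, by decide⟩
/-- Consumer type `((2,1,3,4), 2)`. -/
def gT3 : ConsumerType ({1,2,3,4} : Finset ℕ) := ⟨[2,1,3,4], 2, by decide, by decide, by decide⟩
/-- Consumer type `((3,1,2,4), 2)`. -/
def gT4 : ConsumerType ({1,2,3,4} : Finset ℕ) := ⟨[3,1,2,4], 2, by decide, by decide, by decide⟩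
/-- Consumer type `((1,3,2,4), 2)`. -/
def gT5 : ConsumerType ({1,2,3,4} : Finset ℕ) := ⟨[1,3,2,4], 2, by decide, by decide, by decide⟩
/-- Consumer type `((1,2,3,4), 0)` (the no-choice type). -/
def gT6 : ConsumerType ({1,2,3,4} : Finset ℕ) := ⟨[1,2,3,4], 0, by decide, by decide, by decide⟩

/-- The GSP model on `C = {1,2,3,4}` with the six consumer types
`((2,3,1,4),1)`, `((2,4,1,3),1)`, `((2,1,3,4),2)`, `((3,1,2,4),2)`, `((1,3,2,4),2)`,
`((1,2,3,4),0)` of probabilities `0.41, 0.09, 0.1, 0.01, 0.09, 0.30` respectively. -/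
def Psix (x : ℕ) (S : Finset ℕ) : ℝ :=
  0.41 * Cfun gT1 x S + 0.09 * Cfun gT2 x S + 0.1 * Cfun gT3 x S +
  0.01 * Cfun gT4 x S + 0.09 * Cfun gT5 x S + 0.30 * Cfun gT6 x S

/-- A random attention model (RAM) on the ground set `C`: a strict ranking of the
alternatives of `C` (given by an injective-on-`C` rank function `rk`, lower value = better)
together with an attention rule `μ`, where `μ T S` is the probability of considering
`T ⊆ S` when offered `S`; attention is nonnegative, sums to one, and is monotone
(`μ T S' ≤ μ T S` whenever `T ⊆ S ⊊ S'`). -/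
structure RAM (C : Finset ℕ) where
  rk : ℕ → ℕ
  rk_injOn : Set.InjOn rk C
  μ : Finset ℕ → Finset ℕ → ℝ
  μ_nonneg : ∀ T S : Finset ℕ, T ⊆ S → S ⊆ C → 0 ≤ μ T S
  μ_sum : ∀ S ⊆ C, ∑ T ∈ S.powerset, μ T S = 1
  μ_mono : ∀ T S S' : Finset ℕ, T ⊆ S → S ⊆ S' → S ≠ S' → S' ⊆ C → μ T S' ≤ μ T S

/-- The choice probabilities induced by a RAM: `P(i,S)` is the total attention weight of the
consideration sets `T ⊆ S` whose best-ranked element is `i`, and `P(0,S) = μ(∅,S)`. -/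
def RAM.prob {C : Finset ℕ} (R : RAM C) (x : ℕ) (S : Finset ℕ) : ℝ :=
  if x = 0 then R.μ ∅ S
  else ∑ T ∈ S.powerset.filter (fun T => x ∈ T ∧ ∀ y ∈ T, R.rk x ≤ R.rk y), R.μ T S


lemma ram_key {C : Finset ℕ} (R : RAM C) {x y : ℕ} {S : Finset ℕ}
    (hS : S ⊆ C) (hy : y ∈ S) (hx0 : x ≠ 0) (hr : R.rk y < R.rk x) :
    R.prob x S ≤ R.prob x (S.erase y) := by
  unfold RAM.prob
  rw [if_neg hx0, if_neg hx0]
  have hfe : S.powerset.filter (fun T => x ∈ T ∧ ∀ z ∈ T, R.rk x ≤ R.rk z)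
      = (S.erase y).powerset.filter (fun T => x ∈ T ∧ ∀ z ∈ T, R.rk x ≤ R.rk z) := by
    ext T
    simp only [Finset.mem_filter, Finset.mem_powerset]
    constructor
    · rintro ⟨hTS, hxT, hbest⟩
      refine ⟨fun z hz => Finset.mem_erase.mpr ⟨?_, hTS hz⟩, hxT, hbest⟩
      intro hzy
      subst hzy
      exact absurd (hbest z hz) (not_le.mpr hr)
    · rintro ⟨hTS, h⟩
      exact ⟨hTS.trans (Finset.erase_subset _ _), h⟩
  rw [hfe]
  apply Finset.sum_le_sum
  intro T hT
  have hTs : T ⊆ S.erase y := Finset.mem_powerset.mp (Finset.mem_filter.mp hT).1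
  exact R.μ_mono T (S.erase y) S hTs (Finset.erase_subset _ _)
    (fun h => (Finset.notMem_erase y S) (h.symm ▸ hy)) hS

/-- The GSP class is not contained in the RAM class: the six-type GSP model
`Psix` on `C = {1,2,3,4}` cannot be represented by any random attention model, i.e. no RAM
induces the same choice probabilities for all `S ⊆ C` and all `x ∈ S ∪ {0}`. -/
theorem gsp_not_subset_ram :
    ¬ ∃ R : RAM ({1,2,3,4} : Finset ℕ),
        ∀ S ⊆ ({1,2,3,4} : Finset ℕ), ∀ x ∈ insert 0 S, R.prob x S = Psix x S := by
  rintro ⟨R, hR⟩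
  have hne : R.rk 1 ≠ R.rk 3 := by
    intro h
    have := R.rk_injOn (by simp) (by simp) h
    norm_num at this
  have e1 : R.prob 1 {1,2,3} = 0.11 := by
    rw [hR {1,2,3} (by decide) 1 (by decide)]
    norm_num [Psix, Cfun, picks, subseq, gT1, gT2, gT3, gT4, gT5, gT6]
  have e2 : R.prob 1 {1,2} = 0.1 := by
    rw [hR {1,2} (by decide) 1 (by decide)]
    norm_num [Psix, Cfun, picks, subseq, gT1, gT2, gT3, gT4, gT5, gT6]
  have e3 : R.prob 3 {1,3,4} = 0.6 := by
    rw [hR {1,3,4} (by decide) 3 (by decide)]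
    norm_num [Psix, Cfun, picks, subseq, gT1, gT2, gT3, gT4, gT5, gT6]
  have e4 : R.prob 3 {3,4} = 0.41 := by
    rw [hR {3,4} (by decide) 3 (by decide)]
    norm_num [Psix, Cfun, picks, subseq, gT1, gT2, gT3, gT4, gT5, gT6]
  rcases lt_or_gt_of_ne hne with h13 | h31
  · -- rk 1 < rk 3 : drop 1 from {1,3,4}
    have key := ram_key R (x := 3) (y := 1) (S := {1,3,4}) (by decide) (by decide)
      (by decide) h13
    have herase : ({1,3,4} : Finset ℕ).erase 1 = {3,4} := by decide
    rw [herase, e3, e4] at key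
    norm_num at key
  · -- rk 3 < rk 1 : drop 3 from {1,2,3}
    have key := ram_key R (x := 1) (y := 3) (S := {1,2,3}) (by decide) (by decide)
      (by decide) h31
    have herase : ({1,2,3} : Finset ℕ).erase 3 = {1,2} := by decide
    rw [herase, e1, e2] at key
    norm_num at key
end

section
/- The factor r_1/r_k for revenue-ordered assortments under GSP is tight: consider the GSP model on C = {1,2,3} with a single consumer type ((1,2,3),2) of probability 1, and a revenue function r with r(1) = r(2) = r_1 < r(3) = r_2. Then the assortment {1,3} achieves expected revenue r_2 (the consumer chooses alternative 3), while every revenue-ordered assortment achieves expected revenue at most r_1: offering {3} yields revenue 0 and offering {1,2,3} yields revenue r(2) = r_1. Hence the ratio of the best revenue-ordered assortment's revenue to the optimal revenue equals r_1/r_2. -/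
open Finset

/-- The expected revenue of offering assortment `S` under the GSP model `M`, with revenue
function `r`: `∑_{i ∈ S} P(i,S)·r(i)`. -/
noncomputable def expRevenue {C : Finset ℕ} (M : GSP C) (r : ℕ → ℝ) (S : Finset ℕ) : ℝ :=
  ∑ i ∈ S, M.prob i S * r i

/-- The revenue-ordered assortments for ground set `C` and revenue function `r`:
for each revenue value `v` attained on `C`, the assortment of all products with revenue
at least `v`. -/
noncomputable def revOrdered (C : Finset ℕ) (r : ℕ → ℝ) : Finset (Finset ℕ) :=
  (C.image r).image (fun v => C.filter (fun x => v ≤ r x))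

/-- The single consumer type `((1,2,3), 2)` on ground set `{1,2,3}`. -/
def tightType : ConsumerType ({1,2,3} : Finset ℕ) := ⟨[1,2,3], 2, by decide, by decide, by decide⟩

/-- The GSP model on `C = {1,2,3}` consisting of the single consumer type `((1,2,3),2)`
with probability `1`. -/
def tightGSP : GSP ({1,2,3} : Finset ℕ) :=
  ⟨1, fun _ => 1, fun _ => tightType, fun _ => zero_le_one, by simp⟩


lemma tightGSP_prob (x : ℕ) (S : Finset ℕ) : tightGSP.prob x S = Cfun tightType x S := by
  show ∑ _k : Fin 1, (1 : ℝ) * Cfun tightType x S = _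
  simp

lemma revOrdered_tight_cases (r : ℕ → ℝ) (h12 : r 1 = r 2) (h13 : r 1 < r 3) :
    ∀ S ∈ revOrdered ({1,2,3} : Finset ℕ) r, S = {1,2,3} ∨ S = {3} := by
  intro S hS
  simp only [revOrdered, Finset.mem_image] at hS
  obtain ⟨v, hv, rfl⟩ := hS
  obtain ⟨a, ha, rfl⟩ := hv
  fin_cases ha
  · left
    simp [Finset.filter_insert, Finset.filter_singleton, h12.le, h13.le]
  · left
    simp [Finset.filter_insert, Finset.filter_singleton, ← h12, h13.le]
  · right
    simp [Finset.filter_insert, Finset.filter_singleton, not_le.mpr h13, not_le.mpr (h12 ▸ h13)]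

lemma revOrdered_tight_mem (r : ℕ → ℝ) (h12 : r 1 = r 2) (h13 : r 1 < r 3) :
    ({1,2,3} : Finset ℕ) ∈ revOrdered ({1,2,3} : Finset ℕ) r := by
  simp only [revOrdered, Finset.mem_image]
  refine ⟨r 1, ⟨1, by simp, rfl⟩, ?_⟩
  simp [Finset.filter_insert, Finset.filter_singleton, h12.le, h13.le]

/-- Tightness of the `r₁/r_k` factor for revenue-ordered assortments under
GSP: for the single-type GSP model `((1,2,3),2)` on `{1,2,3}` and any revenue function with
`0 < r(1) = r(2) < r(3)`, the consumer offered `{1,3}` chooses `3`, so the assortment `{1,3}`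
earns `r(3)`, which is optimal; while every revenue-ordered assortment earns at most
`r(1)`: offering `{3}` earns `0` and offering `{1,2,3}` earns `r(2) = r(1)`.  Hence the ratio
of the best revenue-ordered revenue to the optimal revenue is `r(1)/r(3)`. -/
theorem revenue_ordered_tight (r : ℕ → ℝ) (h1 : 0 < r 1) (h12 : r 1 = r 2) (h13 : r 1 < r 3) :
    tightGSP.prob 3 ({1,3} : Finset ℕ) = 1 ∧
    expRevenue tightGSP r ({1,3} : Finset ℕ) = r 3 ∧
    (∀ S ⊆ ({1,2,3} : Finset ℕ), expRevenue tightGSP r S ≤ r 3) ∧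
    expRevenue tightGSP r ({3} : Finset ℕ) = 0 ∧
    expRevenue tightGSP r ({1,2,3} : Finset ℕ) = r 2 ∧
    (∀ S ∈ revOrdered ({1,2,3} : Finset ℕ) r, expRevenue tightGSP r S ≤ r 1) ∧
    (∃ S ∈ revOrdered ({1,2,3} : Finset ℕ) r, expRevenue tightGSP r S = r 1) := by
  have hrev2 : expRevenue tightGSP r ({1,2,3} : Finset ℕ) = r 2 := by
    simp [expRevenue, Cfun, tightType, picks, subseq, tightGSP_prob]
  have hrev3 : expRevenue tightGSP r ({3} : Finset ℕ) = 0 := by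
    simp [expRevenue, Cfun, tightType, picks, subseq, tightGSP_prob]
  refine ⟨?_, ?_, ?_, hrev3, hrev2, ?_, ?_⟩
  · simp [Cfun, tightType, picks, subseq, tightGSP_prob]
  · simp [expRevenue, Cfun, tightType, picks, subseq, tightGSP_prob]
  · intro S hS
    have hp : S ∈ ({1,2,3} : Finset ℕ).powerset := Finset.mem_powerset.mpr hS
    fin_cases hp <;>
      simp [expRevenue, Cfun, tightType, picks, subseq, tightGSP_prob] <;> linarith
  · intro S hS
    rcases revOrdered_tight_cases r h12 h13 S hS with rfl | rfl
    · rw [hrev2, h12]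
    · rw [hrev3]; exact h1.le
  · exact ⟨{1,2,3}, revOrdered_tight_mem r h12 h13, by rw [hrev2, h12]⟩
end

section
/- The generalized stochastic preference model on alternatives C = {T, C', D} with three consumer types — ((T,C',D),1) with probability 0.53, ((C',T,D),1) with probability 0.37, and ((D,T,C'),2) with probability 0.10 — exactly reproduces the decoy experiment data of Herne: P(T,{T,C'}) = 0.53, P(C',{T,C'}) = 0.47, and P(T,{T,C',D}) = 0.63, P(C',{T,C',D}) = 0.37, P(D,{T,C',D}) = 0. In particular P(T,{T,C',D}) > P(T,{T,C'}), a regularity violation. -/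
open Finset

/-- The economic union `T` (encoded as the alternative `1`). -/
def uT : ℕ := 1
/-- The economic union `C'` (encoded as the alternative `2`). -/
def uC : ℕ := 2
/-- The decoy economic union `D` (encoded as the alternative `3`). -/
def uD : ℕ := 3

/-- Consumer type `((T,C',D), 1)` on ground set `{T, C', D}`. -/
def herT1 : ConsumerType ({uT, uC, uD} : Finset ℕ) :=
  ⟨[uT, uC, uD], 1, by decide, by decide, by decide⟩
/-- Consumer type `((C',T,D), 1)` on ground set `{T, C', D}`. -/
def herT2 : ConsumerType ({uT, uC, uD} : Finset ℕ) :=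
  ⟨[uC, uT, uD], 1, by decide, by decide, by decide⟩
/-- Consumer type `((D,T,C'), 2)` on ground set `{T, C', D}`. -/
def herT3 : ConsumerType ({uT, uC, uD} : Finset ℕ) :=
  ⟨[uD, uT, uC], 2, by decide, by decide, by decide⟩

/-- The GSP model for Herne's decoy experiment: consumer types `((T,C',D),1)`,
`((C',T,D),1)`, `((D,T,C'),2)` with probabilities `0.53, 0.37, 0.10`. -/
def Pher (x : ℕ) (S : Finset ℕ) : ℝ :=
  0.53 * Cfun herT1 x S + 0.37 * Cfun herT2 x S + 0.10 * Cfun herT3 x S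

/-- The three-type GSP model `Pher` exactly reproduces the decoy experiment
data of Herne: `P(T,{T,C'}) = 0.53`, `P(C',{T,C'}) = 0.47`, `P(T,{T,C',D}) = 0.63`,
`P(C',{T,C',D}) = 0.37`, `P(D,{T,C',D}) = 0`; in particular
`P(T,{T,C',D}) > P(T,{T,C'})`, a regularity violation. -/
theorem herne_decoy_experiment :
    Pher uT ({uT, uC} : Finset ℕ) = 0.53 ∧
    Pher uC ({uT, uC} : Finset ℕ) = 0.47 ∧
    Pher uT ({uT, uC, uD} : Finset ℕ) = 0.63 ∧
    Pher uC ({uT, uC, uD} : Finset ℕ) = 0.37 ∧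
    Pher uD ({uT, uC, uD} : Finset ℕ) = 0 ∧
    Pher uT ({uT, uC} : Finset ℕ) < Pher uT ({uT, uC, uD} : Finset ℕ) := by
  refine ⟨?_, ?_, ?_, ?_, ?_, ?_⟩ <;>
    norm_num [Pher, Cfun, picks, subseq, herT1, herT2, herT3, uT, uC, uD, Finset.sum_insert, Finset.mem_insert, List.filter]
end
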